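/- Let F be a CDF on [0,1] with density f, median θ_μ > 1/2 and skewness condition ∫₀^{1-θ_μ}(1 - F(θ_μ+t) - F(θ_μ-t))dt ≤ 0. Define the lower threshold θ̲ as the value in [0, 2θ_μ−1] (if it exists, else 0) with ∫_{θ̲}^1 -(v−θ̲)² f(v) dv = -(θ_μ−θ̲)². Then for every θ_s ∈ [0, θ̲]: ∫_{θ_s}^1 -(v−θ_s)² f(v) dv ≥ -(θ_μ−θ_s)². -/

import Mathlib

open MeasureTheory intervalIntegral Set

/-!
Put `G θ = ∫_θ^1 -(v - θ)² f v dv + (θμ - θ)²`, so that the claim is `G θs ≥ 0 = G θlb`.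
Differentiating under the integral and integrating by parts gives
`G' θ = 2 ((1 - θμ) - ∫_θ^1 F)`. The skewness condition says exactly that
`∫_{2θμ-1}^1 F ≥ 1 - θμ`, and `F ≥ 0`, so `G' ≤ 0` and `G` is antitone on `[0, 2θμ - 1]`.
-/

section Density

variable {f : ℝ → ℝ}

theorem integral_sub_mul_eq (hf : Continuous f) (a b θ : ℝ) :
    ∫ v in a..b, (v - θ) * f v = (∫ v in a..b, v * f v) - θ * ∫ v in a..b, f v := by
  rw [← intervalIntegral.integral_const_mul,
    ← intervalIntegral.integral_sub (Continuous.intervalIntegrable (by fun_prop) _ _)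
      (Continuous.intervalIntegrable (by fun_prop) _ _)]
  exact integral_congr fun v _ ↦ by ring

theorem integral_neg_sq_sub_mul_eq (hf : Continuous f) (a b θ : ℝ) :
    ∫ v in a..b, -(v - θ) ^ 2 * f v =
      -(∫ v in a..b, v ^ 2 * f v) + 2 * θ * (∫ v in a..b, v * f v) - θ ^ 2 * ∫ v in a..b, f v := by
  rw [← intervalIntegral.integral_neg, ← intervalIntegral.integral_const_mul,
    ← intervalIntegral.integral_const_mul,
    ← intervalIntegral.integral_add (Continuous.intervalIntegrable (by fun_prop) _ _)
      (Continuous.intervalIntegrable (by fun_prop) _ _),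
    ← intervalIntegral.integral_sub (Continuous.intervalIntegrable (by fun_prop) _ _)
      (Continuous.intervalIntegrable (by fun_prop) _ _)]
  exact integral_congr fun v _ ↦ by ring

/-- The boundary term vanishes because the integrand is zero at `v = θ`. -/
theorem hasDerivAt_integral_neg_sq_sub_mul (hf : Continuous f) (b θ : ℝ) :
    HasDerivAt (fun t ↦ ∫ v in t..b, -(v - t) ^ 2 * f v) (2 * ∫ v in θ..b, (v - θ) * f v) θ := by
  have hderiv {g : ℝ → ℝ} (hg : Continuous g) : HasDerivAt (fun t ↦ ∫ v in t..b, g v) (-g θ) θ :=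
    integral_hasDerivAt_left (hg.intervalIntegrable _ _) (hg.stronglyMeasurableAtFilter _ _)
      hg.continuousAt
  have hA := hderiv (g := fun v ↦ v ^ 2 * f v) (by fun_prop)
  have hB := hderiv (g := fun v ↦ v * f v) (by fun_prop)
  have hC := hderiv hf
  simp_rw [integral_neg_sq_sub_mul_eq hf, integral_sub_mul_eq hf]
  refine ((hA.neg.add (((hasDerivAt_id' θ).const_mul 2).mul hB)).sub
    ((hasDerivAt_pow 2 θ).mul hC)).congr_deriv ?_
  push_cast
  ring

end Density

theorem integral_sub_mul_deriv_eq {F f : ℝ → ℝ} (hF : ∀ x, HasDerivAt F (f x) x)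
    (hf : Continuous f) (a b : ℝ) :
    ∫ v in a..b, (v - a) * f v = (b - a) * F b - ∫ v in a..b, F v := by
  rw [integral_mul_deriv_eq_deriv_mul (u := fun v ↦ v - a) (u' := fun _ ↦ 1)
    (fun x _ ↦ (hasDerivAt_id' x).sub_const a) (fun x _ ↦ hF x) intervalIntegrable_const
    (hf.intervalIntegrable _ _)]
  simp

theorem integral_one_sub_comp_add_sub_comp_sub {F : ℝ → ℝ} (hF : Continuous F) (m c : ℝ) :
    ∫ t in (0 : ℝ)..c, (1 - F (m + t) - F (m - t)) = c - ∫ v in (m - c)..(m + c), F v := by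
  rw [intervalIntegral.integral_sub (Continuous.intervalIntegrable (by fun_prop) _ _)
      (Continuous.intervalIntegrable (by fun_prop) _ _),
    intervalIntegral.integral_sub intervalIntegrable_const
      (Continuous.intervalIntegrable (by fun_prop) _ _),
    integral_comp_add_left, integral_comp_sub_left, ← integral_add_adjacent_intervals
      (hF.intervalIntegrable (m - c) m) (hF.intervalIntegrable m (m + c))]
  simp only [intervalIntegral.integral_const, add_zero, sub_zero, smul_eq_mul, mul_one]
  ring

section Skewness

variable {F : ℝ → ℝ} {θμ : ℝ}

theorem one_sub_le_integral_of_skew (hF : Continuous F) (hF_nonneg : ∀ x ∈ Icc (0 : ℝ) 1, 0 ≤ F x)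
    (hθμ1 : θμ ≤ 1) (hskew : (∫ t in (0 : ℝ)..(1 - θμ), (1 - F (θμ + t) - F (θμ - t))) ≤ 0)
    {θ : ℝ} (hθ : θ ∈ Icc 0 (2 * θμ - 1)) :
    1 - θμ ≤ ∫ v in θ..1, F v := by
  rw [integral_one_sub_comp_add_sub_comp_sub hF, show θμ - (1 - θμ) = 2 * θμ - 1 by ring,
    add_sub_cancel] at hskew
  have hnonneg : 0 ≤ ∫ v in θ..(2 * θμ - 1), F v :=
    integral_nonneg hθ.2 fun x hx ↦ hF_nonneg x ⟨hθ.1.trans hx.1, hx.2.trans (by linarith)⟩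
  rw [← integral_add_adjacent_intervals (hF.intervalIntegrable θ (2 * θμ - 1))
    (hF.intervalIntegrable _ 1)]
  linarith

theorem antitoneOn_integral_neg_sq_sub_mul_add_sq {f : ℝ → ℝ} (hF : ∀ x, HasDerivAt F (f x) x)
    (hf : Continuous f) (hF1 : F 1 = 1) (hF_nonneg : ∀ x ∈ Icc (0 : ℝ) 1, 0 ≤ F x)
    (hθμ1 : θμ ≤ 1) (hskew : (∫ t in (0 : ℝ)..(1 - θμ), (1 - F (θμ + t) - F (θμ - t))) ≤ 0) :
    AntitoneOn (fun θ ↦ (∫ v in θ..1, -(v - θ) ^ 2 * f v) + (θμ - θ) ^ 2)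
      (Icc 0 (2 * θμ - 1)) := by
  have hFc : Continuous F := continuous_iff_continuousAt.2 fun x ↦ (hF x).continuousAt
  have hG (θ : ℝ) : HasDerivAt (fun θ ↦ (∫ v in θ..1, -(v - θ) ^ 2 * f v) + (θμ - θ) ^ 2)
      (2 * ((1 - θ) * F 1 - ∫ v in θ..1, F v) - 2 * (θμ - θ)) θ := by
    refine ((hasDerivAt_integral_neg_sq_sub_mul hf 1 θ).add
      (((hasDerivAt_id' θ).const_sub θμ).pow 2)).congr_deriv ?_
    rw [integral_sub_mul_deriv_eq hF hf]
    push_cast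
    ring
  refine antitoneOn_of_hasDerivWithinAt_nonpos (convex_Icc _ _)
    (HasDerivAt.continuousOn fun θ _ ↦ hG θ) (fun θ _ ↦ (hG θ).hasDerivWithinAt) fun θ hθ ↦ ?_
  have hF_int := one_sub_le_integral_of_skew hFc hF_nonneg hθμ1 hskew (interior_subset hθ)
  rw [hF1]
  linarith

end Skewness

theorem tail_types_prefer_own_general
    (F f : ℝ → ℝ) (θμ θlb : ℝ)
    (hF : ∀ x, HasDerivAt F (f x) x)
    (hf : Continuous f)
    (hfpos : ∀ x ∈ Set.Icc (0:ℝ) 1, 0 < f x)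
    (hF0 : F 0 = 0) (hF1 : F 1 = 1)
    (hθμ1 : θμ ≤ 1)
    (hskew : (∫ t in (0:ℝ)..(1 - θμ), (1 - F (θμ + t) - F (θμ - t))) ≤ 0)
    (hθlb : θlb ∈ Set.Icc (0:ℝ) (2*θμ - 1))
    (hroot : (∫ v in θlb..1, -(v - θlb)^2 * f v) = -(θμ - θlb)^2) :
    ∀ θs ∈ Set.Icc (0:ℝ) θlb,
      -(θμ - θs)^2 ≤ ∫ v in θs..1, -(v - θs)^2 * f v := by
  have hF_mono : MonotoneOn F (Icc 0 1) :=
    monotoneOn_of_hasDerivWithinAt_nonneg (convex_Icc 0 1)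
      (HasDerivAt.continuousOn fun x _ ↦ hF x) (fun x _ ↦ (hF x).hasDerivWithinAt)
      fun x hx ↦ (hfpos x (interior_subset hx)).le
  have hF_nonneg (x : ℝ) (hx : x ∈ Icc (0 : ℝ) 1) : 0 ≤ F x :=
    hF0 ▸ hF_mono (left_mem_Icc.2 zero_le_one) hx hx.1
  intro θs hθs
  have h := antitoneOn_integral_neg_sq_sub_mul_add_sq hF hf hF1 hF_nonneg hθμ1 hskew
    ⟨hθs.1, hθs.2.trans hθlb.2⟩ hθlb hθs.2
  simp only [hroot] at h
  linarith

/-- Lemma 1 of the paper, left tail: For a CDF `F` on `[0,1]` with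
density `f`, median `θμ > 1/2` and the skewness condition, if the lower threshold
`θlb ∈ [0, 2θμ - 1]` satisfies `∫_{θlb}^1 -(v-θlb)² f(v) dv = -(θμ-θlb)²`, then
every type `θs ∈ [0, θlb]` satisfies `∫_{θs}^1 -(v-θs)² f(v) dv ≥ -(θμ-θs)²`. -/
theorem tail_types_prefer_own
    (F f : ℝ → ℝ) (θμ θlb : ℝ)
    (hF : ∀ x, HasDerivAt F (f x) x)
    (hf : Continuous f)
    (hfpos : ∀ x ∈ Set.Icc (0:ℝ) 1, 0 < f x)
    (hF0 : F 0 = 0) (hF1 : F 1 = 1)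
    (hmed : F θμ = 1/2) (hθμ : 1/2 < θμ) (hθμ1 : θμ ≤ 1)
    (hskew : (∫ t in (0:ℝ)..(1 - θμ), (1 - F (θμ + t) - F (θμ - t))) ≤ 0)
    (hθlb : θlb ∈ Set.Icc (0:ℝ) (2*θμ - 1))
    (hroot : (∫ v in θlb..1, -(v - θlb)^2 * f v) = -(θμ - θlb)^2) :
    ∀ θs ∈ Set.Icc (0:ℝ) θlb,
      -(θμ - θs)^2 ≤ ∫ v in θs..1, -(v - θs)^2 * f v :=
  tail_types_prefer_own_general F f θμ θlb hF hf hfpos hF0 hF1 hθμ1 hskew hθlb hroot
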